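/- arXiv:2501.04175 — 2 statements merged into one kernel-verified Lean document; each statement's English description precedes it below -/
import Mathlib

section
/- Fix δ > 0 with E_min + δ < E₀ and 0 < α < 1/2. Then there is a constant C such that for all E ∈ [E_min + δ, E₀] and all x₁, x₂ ∈ [x₋(E), x₊(E)], |θ(x₁,E) - θ(x₂,E)| ≤ C|x₁ - x₂|^α. -/
open MeasureTheory

lemma sqrt_sub_le' (a b : ℝ) (ha : 0 ≤ a) (hab : a ≤ b) :
    Real.sqrt b - Real.sqrt a ≤ Real.sqrt (b - a) := by
  have hd : (0:ℝ) ≤ b - a := by linarith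
  nlinarith [Real.sq_sqrt ha, Real.sq_sqrt hd, Real.sq_sqrt (ha.trans hab),
    Real.sqrt_nonneg a, Real.sqrt_nonneg (b - a), Real.sqrt_nonneg b,
    sq_nonneg (Real.sqrt a + Real.sqrt (b-a) - Real.sqrt b),
    sq_nonneg (Real.sqrt a + Real.sqrt (b-a) + Real.sqrt b)]

lemma one_div_sqrt_eq (s : ℝ) (hs : 0 ≤ s) : 1 / Real.sqrt s = s ^ (-(1/2) : ℝ) := by
  rw [Real.rpow_neg hs, ← Real.sqrt_eq_rpow, one_div]

lemma rpow_half_integrable (p u v : ℝ) :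
    IntervalIntegrable (fun y => (p - y) ^ (-(1/2) : ℝ)) volume u v := by
  have h := (intervalIntegral.intervalIntegrable_rpow' (a := p - u) (b := p - v)
    (r := (-(1/2):ℝ)) (by norm_num)).comp_sub_left p
  simpa using h

lemma rpow_half_integrable' (q u v : ℝ) :
    IntervalIntegrable (fun y => (y - q) ^ (-(1/2) : ℝ)) volume u v := by
  have h := (intervalIntegral.intervalIntegrable_rpow' (a := u - q) (b := v - q)
    (r := (-(1/2):ℝ)) (by norm_num)).comp_sub_right q
  simpa using h

lemma int_rpow_half (p u v : ℝ) :
    ∫ y in v..u, (p - y) ^ (-(1/2) : ℝ) = 2 * (Real.sqrt (p - v) - Real.sqrt (p - u)) := by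
  rw [intervalIntegral.integral_comp_sub_left (fun x => x ^ (-(1/2):ℝ)) p,
    integral_rpow (Or.inl (by norm_num))]
  rw [show (-(1/2):ℝ) + 1 = 1/2 by norm_num]
  rw [Real.sqrt_eq_rpow, Real.sqrt_eq_rpow]
  ring

lemma int_rpow_half' (q u v : ℝ) :
    ∫ y in v..u, (y - q) ^ (-(1/2) : ℝ) = 2 * (Real.sqrt (u - q) - Real.sqrt (v - q)) := by
  rw [intervalIntegral.integral_comp_sub_right (fun x => x ^ (-(1/2):ℝ)) q,
    integral_rpow (Or.inl (by norm_num))]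
  rw [show (-(1/2):ℝ) + 1 = 1/2 by norm_num]
  rw [Real.sqrt_eq_rpow, Real.sqrt_eq_rpow]
  ring

set_option maxHeartbeats 1000000 in
/-- **Hölder continuity of the angle variable in `x`.**
Fix `δ > 0` with `E_min + δ < E₀` (where `E_min = U₀ 0`) and `0 < α < 1/2`.
Then there is a constant `C` such that for all `E ∈ [E_min + δ, E₀]` and all
`x₁, x₂ ∈ [x₋(E), x₊(E)]`, `|θ(x₁,E) - θ(x₂,E)| ≤ C |x₁ - x₂|^α`, where
`θ(x,E) = (1/T(E)) ∫_{x₋(E)}^x (2(E-U₀ y))^{-1/2} dy` is the angle variable. -/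
theorem angle_variable_holder
    (U₀ : ℝ → ℝ) (E₀ : ℝ)
    (hC3 : ContDiff ℝ 3 U₀)
    (heven : ∀ x, U₀ (-x) = U₀ x)
    (hconv : ConvexOn ℝ Set.univ U₀)
    (hU'' : 0 < deriv (deriv U₀) 0)
    (hU' : ∀ x : ℝ, 0 < x → 0 < deriv U₀ x)
    (hE₀ : U₀ 0 < E₀)
    (xp xm : ℝ → ℝ)
    (hxp : ∀ E ∈ Set.Ioc (U₀ 0) E₀, 0 < xp E ∧ U₀ (xp E) = E)
    (hxm : ∀ E ∈ Set.Ioc (U₀ 0) E₀, xm E = -xp E)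
    (T : ℝ → ℝ) (θ : ℝ → ℝ → ℝ)
    (hT : ∀ E ∈ Set.Ioc (U₀ 0) E₀,
      T E = 2 * ∫ y in (xm E)..(xp E), 1 / Real.sqrt (2 * (E - U₀ y)))
    (hθ : ∀ E ∈ Set.Ioc (U₀ 0) E₀, ∀ x : ℝ,
      θ x E = (1 / T E) * ∫ y in (xm E)..x, 1 / Real.sqrt (2 * (E - U₀ y)))
    (δ : ℝ) (hδ : 0 < δ) (hδE : U₀ 0 + δ < E₀)
    (α : ℝ) (hα : 0 < α) (hα2 : α < 1 / 2) :
    ∃ C : ℝ, ∀ E ∈ Set.Icc (U₀ 0 + δ) E₀,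
      ∀ x₁ ∈ Set.Icc (xm E) (xp E), ∀ x₂ ∈ Set.Icc (xm E) (xp E),
        |θ x₁ E - θ x₂ E| ≤ C * |x₁ - x₂| ^ α := by
  have hdiff : Differentiable ℝ U₀ := hC3.differentiable (by norm_num)
  have hcont : Continuous U₀ := hdiff.continuous
  have hmonoD : Monotone (deriv U₀) := fun x y hxy =>
    hconv.monotoneOn_deriv (fun z _ => hdiff.differentiableAt) (Set.mem_univ x)
      (Set.mem_univ y) hxy
  have hmin : ∀ y, U₀ 0 ≤ U₀ y := by
    intro y
    have h2 := hconv.2 (Set.mem_univ y) (Set.mem_univ (-y))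
      (by norm_num : (0:ℝ) ≤ 1/2) (by norm_num : (0:ℝ) ≤ 1/2) (by norm_num)
    rw [heven y] at h2
    rw [show (1/2:ℝ) • y + (1/2:ℝ) • (-y) = 0 by rw [smul_eq_mul, smul_eq_mul]; ring] at h2
    simp only [smul_eq_mul] at h2
    linarith
  have hSM : StrictMonoOn U₀ (Set.Ici 0) := by
    apply strictMonoOn_of_deriv_pos (convex_Ici 0) hcont.continuousOn
    intro x hx
    rw [interior_Ici] at hx
    exact hU' x hx
  have hEaIoc : U₀ 0 + δ/2 ∈ Set.Ioc (U₀ 0) E₀ := ⟨by linarith, by linarith⟩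
  obtain ⟨ha0, hUa⟩ := hxp _ hEaIoc
  set a := xp (U₀ 0 + δ/2) with ha_def
  have hE₀Ioc : E₀ ∈ Set.Ioc (U₀ 0) E₀ := ⟨hE₀, le_refl _⟩
  obtain ⟨hL0, hUL⟩ := hxp _ hE₀Ioc
  set L := xp E₀ with hL_def
  set ε := deriv U₀ a with hε_def
  have hε : 0 < ε := hU' a ha0
  set m := min (δ/2) ε with hm_def
  have hm0 : 0 < m := lt_min (by linarith) hε
  have hmem : ∀ E ∈ Set.Icc (U₀ 0 + δ) E₀, E ∈ Set.Ioc (U₀ 0) E₀ := fun E hE =>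
    ⟨by linarith [hE.1], hE.2⟩
  have haE : ∀ E ∈ Set.Icc (U₀ 0 + δ) E₀, a ≤ xp E := by
    intro E hE
    by_contra h
    push_neg at h
    have h2 := hSM (le_of_lt (hxp E (hmem E hE)).1) (le_of_lt ha0) h
    rw [(hxp E (hmem E hE)).2, hUa] at h2
    linarith [hE.1]
  have hEL : ∀ E ∈ Set.Icc (U₀ 0 + δ) E₀, xp E ≤ L := by
    intro E hE
    by_contra h
    push_neg at h
    have h2 := hSM (le_of_lt hL0) (le_of_lt (hxp E (hmem E hE)).1) h
    rw [(hxp E (hmem E hE)).2, hUL] at h2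
    linarith [hE.2]
  -- the key lower bound on E - U₀ y
  have key : ∀ E ∈ Set.Icc (U₀ 0 + δ) E₀, ∀ y ∈ Set.Icc (xm E) (xp E),
      m * min 1 (min (xp E - y) (y - xm E)) ≤ E - U₀ y := by
    intro E hE y hy
    obtain ⟨hp0, hUp⟩ := hxp E (hmem E hE)
    have hq := hxm E (hmem E hE)
    have haE' := haE E hE
    have half : ∀ z ∈ Set.Icc (0:ℝ) (xp E), m * min 1 (xp E - z) ≤ E - U₀ z := by
      intro z hz
      have hminle : min 1 (xp E - z) ≤ 1 := min_le_left _ _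
      have hmin0 : (0:ℝ) ≤ min 1 (xp E - z) := le_min one_pos.le (by linarith [hz.2])
      rcases le_or_gt z a with hza | haz
      · have h1 : U₀ z ≤ U₀ a := hSM.monotoneOn hz.1 (Set.mem_Ici.2 ha0.le) hza
        rw [hUa] at h1
        have h3 : m * min 1 (xp E - z) ≤ m * 1 :=
          mul_le_mul_of_nonneg_left hminle hm0.le
        have h4 : m ≤ δ/2 := min_le_left _ _
        have h5 : U₀ 0 + δ ≤ E := hE.1
        nlinarith
      · rcases eq_or_lt_of_le hz.2 with heq | hlt
        · rw [heq, hUp, sub_self, sub_self, min_eq_right (zero_le_one), mul_zero]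
        · obtain ⟨c, hc, hderiv⟩ := exists_deriv_eq_slope U₀ hlt
            (hcont.continuousOn) (hdiff.differentiableOn)
          have hεc : ε ≤ deriv U₀ c := hmonoD (by linarith [hc.1] : a ≤ c)
          have h2 : deriv U₀ c * (xp E - z) = U₀ (xp E) - U₀ z := by
            rw [eq_div_iff (by linarith : xp E - z ≠ 0)] at hderiv
            linarith [hderiv]
          have hmle : m ≤ ε := min_le_right _ _
          have h6 : min 1 (xp E - z) ≤ xp E - z := min_le_right _ _
          have h7 : m * min 1 (xp E - z) ≤ ε * (xp E - z) := by nlinarith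
          rw [hUp] at h2
          nlinarith
    rcases le_or_gt 0 y with hy0 | hy0
    · have h1 := half y ⟨hy0, hy.2⟩
      have hle : min 1 (min (xp E - y) (y - xm E)) ≤ min 1 (xp E - y) :=
        min_le_min (le_refl 1) (min_le_left _ _)
      nlinarith
    · have hyIcc : -y ∈ Set.Icc (0:ℝ) (xp E) := by
        constructor
        · linarith
        · rw [hq] at hy; linarith [hy.1]
      have h1 := half (-y) hyIcc
      rw [heven y] at h1
      have hle : min 1 (min (xp E - y) (y - xm E)) ≤ min 1 (xp E - -y) := by
        apply min_le_min (le_refl 1)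
        rw [hq]
        have h2 := min_le_right (xp E - y) (y - -xp E)
        linarith
      nlinarith
  have hxmle : ∀ E ∈ Set.Icc (U₀ 0 + δ) E₀, xm E ≤ xp E := by
    intro E hE
    rw [hxm E (hmem E hE)]
    linarith [(hxp E (hmem E hE)).1]
  set c₀ : ℝ := 1 / Real.sqrt (2 * m) with hc₀_def
  have hc₀ : 0 < c₀ := one_div_pos.2 (Real.sqrt_pos.2 (by linarith))
  have hGint : ∀ E u v : ℝ, IntervalIntegrable
      (fun y => c₀ * (1 + (xp E - y) ^ (-(1/2):ℝ) + (y - xm E) ^ (-(1/2):ℝ))) volume u v := by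
    intro E u v
    exact (((intervalIntegrable_const).add (rpow_half_integrable _ _ _)).add
      (rpow_half_integrable' _ _ _)).const_mul c₀
  have hFle : ∀ E ∈ Set.Icc (U₀ 0 + δ) E₀, ∀ y ∈ Set.Icc (xm E) (xp E),
      1 / Real.sqrt (2 * (E - U₀ y)) ≤
        c₀ * (1 + (xp E - y) ^ (-(1/2):ℝ) + (y - xm E) ^ (-(1/2):ℝ)) := by
    intro E hE y hy
    obtain ⟨hp0, hUp⟩ := hxp E (hmem E hE)
    have hq := hxm E (hmem E hE)
    have h1 : 0 ≤ xp E - y := by linarith [hy.2]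
    have h2 : 0 ≤ y - xm E := by linarith [hy.1]
    have e1 : 0 ≤ (xp E - y) ^ (-(1/2):ℝ) := Real.rpow_nonneg h1 _
    have e2 : 0 ≤ (y - xm E) ^ (-(1/2):ℝ) := Real.rpow_nonneg h2 _
    have hRHS : 0 ≤ c₀ * (1 + (xp E - y) ^ (-(1/2):ℝ) + (y - xm E) ^ (-(1/2):ℝ)) := by
      have := hc₀.le
      nlinarith
    set t := min 1 (min (xp E - y) (y - xm E)) with ht_def
    have ht0 : 0 ≤ t := le_min zero_le_one (le_min h1 h2)
    rcases eq_or_lt_of_le ht0 with ht | ht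
    · have hX : min (xp E - y) (y - xm E) = 0 := by
        rcases lt_or_ge 0 (min (xp E - y) (y - xm E)) with hpos | hle0
        · exfalso
          have : 0 < t := lt_min one_pos hpos
          linarith [this, ht.symm ▸ this]
        · linarith [le_min h1 h2]
      have hUyE : U₀ y = E := by
        rcases min_cases (xp E - y) (y - xm E) with ⟨hm2, _⟩ | ⟨hm2, _⟩
        · have : y = xp E := by rw [hm2] at hX; linarith
          rw [this, hUp]
        · have : y = xm E := by rw [hm2] at hX; linarith
          rw [this, hq, heven, hUp]
      rw [hUyE, sub_self, mul_zero, Real.sqrt_zero, div_zero]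
      exact hRHS
    · have hkey := key E hE y hy
      have hlt : (0:ℝ) < 2 * m * t := by positivity
      have hle1 : 1 / Real.sqrt (2 * (E - U₀ y)) ≤ 1 / Real.sqrt (2 * m * t) := by
        apply one_div_le_one_div_of_le (Real.sqrt_pos.2 hlt)
        apply Real.sqrt_le_sqrt
        nlinarith [hkey]
      have heq2 : 1 / Real.sqrt (2 * m * t) = c₀ * (1 / Real.sqrt t) := by
        rw [Real.sqrt_mul (by positivity : (0:ℝ) ≤ 2 * m) t, hc₀_def]
        rw [one_div, one_div, one_div, mul_inv]
      have hsum : 1 / Real.sqrt t ≤ 1 + (xp E - y) ^ (-(1/2):ℝ) + (y - xm E) ^ (-(1/2):ℝ) := by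
        rcases min_cases 1 (min (xp E - y) (y - xm E)) with ⟨hm1, _⟩ | ⟨hm1, _⟩
        · rw [ht_def, hm1, Real.sqrt_one]
          norm_num
          linarith
        · rcases min_cases (xp E - y) (y - xm E) with ⟨hm2, _⟩ | ⟨hm2, _⟩
          · rw [ht_def, hm1, hm2, one_div_sqrt_eq _ h1]
            linarith
          · rw [ht_def, hm1, hm2, one_div_sqrt_eq _ h2]
            linarith
      rw [heq2] at hle1
      refine hle1.trans ?_
      exact mul_le_mul_of_nonneg_left hsum hc₀.le
  have hFm : ∀ E : ℝ, Measurable (fun y => 1 / Real.sqrt (2 * (E - U₀ y))) := by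
    intro E
    simp only [one_div]
    exact ((Real.continuous_sqrt.comp
      (continuous_const.mul (continuous_const.sub hcont))).measurable).inv
  have hFint : ∀ E ∈ Set.Icc (U₀ 0 + δ) E₀, ∀ u ∈ Set.Icc (xm E) (xp E),
      ∀ v ∈ Set.Icc (xm E) (xp E),
      IntervalIntegrable (fun y => 1 / Real.sqrt (2 * (E - U₀ y))) volume u v := by
    intro E hE u hu v hv
    apply (hGint E u v).mono_fun' ((hFm E).aestronglyMeasurable)
    apply ae_restrict_of_forall_mem measurableSet_uIoc
    intro y hy
    have hy' : y ∈ Set.Icc (xm E) (xp E) := by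
      have hsub : Set.uIoc u v ⊆ Set.Icc (xm E) (xp E) := by
        rw [← Set.uIcc_of_le (hxmle E hE)]
        refine (Set.Ioc_subset_Icc_self).trans (Set.uIcc_subset_uIcc ?_ ?_) <;>
          rw [Set.uIcc_of_le (hxmle E hE)]
        exacts [hu, hv]
      exact hsub hy
    dsimp only
    rw [Real.norm_of_nonneg (by positivity)]
    exact hFle E hE y hy'
  set c₁ : ℝ := 1 / Real.sqrt (2 * (E₀ - U₀ 0)) with hc₁_def
  have hc₁ : 0 < c₁ := one_div_pos.2 (Real.sqrt_pos.2 (by nlinarith))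
  have hTlow : ∀ E ∈ Set.Icc (U₀ 0 + δ) E₀, 4 * a * c₁ ≤ T E := by
    intro E hE
    obtain ⟨hp0, hUp⟩ := hxp E (hmem E hE)
    have hq := hxm E (hmem E hE)
    have haE' := haE E hE
    have hxmIcc : xm E ∈ Set.Icc (xm E) (xp E) := ⟨le_rfl, hxmle E hE⟩
    have hxpIcc : xp E ∈ Set.Icc (xm E) (xp E) := ⟨hxmle E hE, le_rfl⟩
    have hma : -a ∈ Set.Icc (xm E) (xp E) := ⟨by rw [hq]; linarith, by linarith⟩
    have hpa : a ∈ Set.Icc (xm E) (xp E) := ⟨by rw [hq]; linarith, haE'⟩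
    have I1 := hFint E hE _ hxmIcc _ hma
    have I2 := hFint E hE _ hma _ hpa
    have I3 := hFint E hE _ hpa _ hxpIcc
    rw [hT E (hmem E hE)]
    have e2 : (∫ y in (-a)..a, 1 / Real.sqrt (2 * (E - U₀ y))) +
        (∫ y in a..(xp E), 1 / Real.sqrt (2 * (E - U₀ y))) =
        ∫ y in (-a)..(xp E), 1 / Real.sqrt (2 * (E - U₀ y)) :=
      intervalIntegral.integral_add_adjacent_intervals I2 I3
    have e1 : (∫ y in (xm E)..(-a), 1 / Real.sqrt (2 * (E - U₀ y))) +
        (∫ y in (-a)..(xp E), 1 / Real.sqrt (2 * (E - U₀ y))) =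
        ∫ y in (xm E)..(xp E), 1 / Real.sqrt (2 * (E - U₀ y)) :=
      intervalIntegral.integral_add_adjacent_intervals I1 (I2.trans I3)
    have hmid : (a - (-a)) * c₁ ≤ ∫ y in (-a)..a, 1 / Real.sqrt (2 * (E - U₀ y)) := by
      have hbound : ∀ y ∈ Set.Icc (-a) a, c₁ ≤ 1 / Real.sqrt (2 * (E - U₀ y)) := by
        intro y hy'
        have hUy : U₀ y ≤ U₀ a := by
          rcases le_or_gt 0 y with h | h
          · exact hSM.monotoneOn (Set.mem_Ici.2 h) (Set.mem_Ici.2 ha0.le) hy'.2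
          · rw [← heven y]
            exact hSM.monotoneOn (Set.mem_Ici.2 (by linarith)) (Set.mem_Ici.2 ha0.le)
              (by linarith [hy'.1])
        rw [hUa] at hUy
        apply one_div_le_one_div_of_le
        · apply Real.sqrt_pos.2
          nlinarith [hE.1]
        · apply Real.sqrt_le_sqrt
          nlinarith [hmin y, hE.2]
      have := intervalIntegral.integral_mono_on (by linarith : -a ≤ a)
        (intervalIntegrable_const (c := c₁)) I2 hbound
      simpa only [intervalIntegral.integral_const, smul_eq_mul] using this
    have hnn1 : 0 ≤ ∫ y in (xm E)..(-a), 1 / Real.sqrt (2 * (E - U₀ y)) := by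
      apply intervalIntegral.integral_nonneg (by rw [hq]; linarith)
      intro u _
      positivity
    have hnn3 : 0 ≤ ∫ y in a..(xp E), 1 / Real.sqrt (2 * (E - U₀ y)) := by
      apply intervalIntegral.integral_nonneg (by linarith)
      intro u _
      positivity
    nlinarith [e1, e2, hmid, hnn1, hnn3]
  set K : ℝ := c₀ * (Real.sqrt (2 * L) + 4) with hK_def
  have hK : 0 < K := by positivity
  set T₀ : ℝ := 4 * a * c₁ with hT₀_def
  have hT₀ : 0 < T₀ := by positivity
  set C : ℝ := (1 / T₀) * K * (2 * L) ^ (1/2 - α : ℝ) with hC_def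
  have hC : 0 ≤ C := by positivity
  have main : ∀ E ∈ Set.Icc (U₀ 0 + δ) E₀, ∀ x₁ ∈ Set.Icc (xm E) (xp E),
      ∀ x₂ ∈ Set.Icc (xm E) (xp E), x₂ ≤ x₁ →
      |θ x₁ E - θ x₂ E| ≤ C * |x₁ - x₂| ^ α := by
    intro E hE x₁ hx₁ x₂ hx₂ h21
    rcases eq_or_lt_of_le h21 with heq | hlt
    · rw [heq, sub_self, sub_self, abs_zero, Real.zero_rpow hα.ne']
      simp
    obtain ⟨hp0, hUp⟩ := hxp E (hmem E hE)
    have hq := hxm E (hmem E hE)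
    have hEL' := hEL E hE
    have hxmIcc : xm E ∈ Set.Icc (xm E) (xp E) := ⟨le_rfl, hxmle E hE⟩
    have hI₁ := hFint E hE _ hxmIcc _ hx₁
    have hI₂ := hFint E hE _ hxmIcc _ hx₂
    have hI := hFint E hE _ hx₂ _ hx₁
    have hTpos : 0 < T E := lt_of_lt_of_le hT₀ (hTlow E hE)
    have hsubθ : θ x₁ E - θ x₂ E =
        (1 / T E) * ∫ y in x₂..x₁, 1 / Real.sqrt (2 * (E - U₀ y)) := by
      rw [hθ E (hmem E hE) x₁, hθ E (hmem E hE) x₂, ← mul_sub,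
        intervalIntegral.integral_interval_sub_left hI₁ hI₂]
    have ht0 : (0:ℝ) < x₁ - x₂ := by linarith
    have ht2L : x₁ - x₂ ≤ 2 * L := by
      have hA := hx₁.2
      have hB := hx₂.1
      rw [hq] at hB
      linarith [hEL E hE]
    have hintG : (∫ y in x₂..x₁,
        c₀ * (1 + (xp E - y) ^ (-(1/2):ℝ) + (y - xm E) ^ (-(1/2):ℝ)))
        ≤ K * Real.sqrt (x₁ - x₂) := by
      rw [intervalIntegral.integral_const_mul]
      have hadd : (∫ y in x₂..x₁,
          (1 + (xp E - y) ^ (-(1/2):ℝ) + (y - xm E) ^ (-(1/2):ℝ)))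
          = (x₁ - x₂) + (∫ y in x₂..x₁, (xp E - y) ^ (-(1/2):ℝ))
            + ∫ y in x₂..x₁, (y - xm E) ^ (-(1/2):ℝ) := by
        rw [intervalIntegral.integral_add ((intervalIntegrable_const).add
            (rpow_half_integrable _ _ _)) (rpow_half_integrable' _ _ _),
          intervalIntegral.integral_add (intervalIntegrable_const)
            (rpow_half_integrable _ _ _)]
        simp [smul_eq_mul]
      have hb1 : x₁ - x₂ ≤ Real.sqrt (2 * L) * Real.sqrt (x₁ - x₂) := by
        nth_rewrite 1 [← Real.mul_self_sqrt ht0.le]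
        exact mul_le_mul_of_nonneg_right (Real.sqrt_le_sqrt ht2L) (Real.sqrt_nonneg _)
      have hb2 : (∫ y in x₂..x₁, (xp E - y) ^ (-(1/2):ℝ))
          ≤ 2 * Real.sqrt (x₁ - x₂) := by
        rw [int_rpow_half]
        have h1 : (0:ℝ) ≤ xp E - x₁ := by linarith [hx₁.2]
        have h2 : xp E - x₁ ≤ xp E - x₂ := by linarith
        have := sqrt_sub_le' (xp E - x₁) (xp E - x₂) h1 h2
        rw [show xp E - x₂ - (xp E - x₁) = x₁ - x₂ by ring] at this
        linarith
      have hb3 : (∫ y in x₂..x₁, (y - xm E) ^ (-(1/2):ℝ))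
          ≤ 2 * Real.sqrt (x₁ - x₂) := by
        rw [int_rpow_half']
        have h1 : (0:ℝ) ≤ x₂ - xm E := by linarith [hx₂.1]
        have h2 : x₂ - xm E ≤ x₁ - xm E := by linarith
        have := sqrt_sub_le' (x₂ - xm E) (x₁ - xm E) h1 h2
        rw [show x₁ - xm E - (x₂ - xm E) = x₁ - x₂ by ring] at this
        linarith
      rw [hadd, hK_def]
      nlinarith [hc₀.le, Real.sqrt_nonneg (x₁ - x₂)]
    have hintF : (∫ y in x₂..x₁, 1 / Real.sqrt (2 * (E - U₀ y)))
        ≤ K * Real.sqrt (x₁ - x₂) := by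
      refine le_trans ?_ hintG
      apply intervalIntegral.integral_mono_on h21 hI (hGint E x₂ x₁)
      intro y hy
      apply hFle E hE
      exact ⟨le_trans hx₂.1 hy.1, le_trans hy.2 hx₁.2⟩
    have hintnn : 0 ≤ ∫ y in x₂..x₁, 1 / Real.sqrt (2 * (E - U₀ y)) := by
      apply intervalIntegral.integral_nonneg h21
      intro u _
      positivity
    rw [hsubθ, abs_mul, abs_of_pos (one_div_pos.2 hTpos), abs_of_nonneg hintnn,
      abs_of_pos ht0]
    have hstep1 : (1 / T E) * (∫ y in x₂..x₁, 1 / Real.sqrt (2 * (E - U₀ y)))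
        ≤ (1 / T₀) * (K * Real.sqrt (x₁ - x₂)) := by
      apply mul_le_mul (one_div_le_one_div_of_le hT₀ (hTlow E hE)) hintF hintnn
      positivity
    refine hstep1.trans ?_
    have hsq : Real.sqrt (x₁ - x₂) ≤ (2 * L) ^ (1/2 - α : ℝ) * (x₁ - x₂) ^ α := by
      have h' : Real.sqrt (x₁ - x₂) = (x₁ - x₂) ^ (α:ℝ) * (x₁ - x₂) ^ ((1:ℝ)/2 - α) := by
        rw [← Real.rpow_add ht0, show (α + ((1:ℝ)/2 - α)) = 1/2 by ring,
          Real.sqrt_eq_rpow]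
      rw [h', mul_comm]
      exact mul_le_mul_of_nonneg_right
        (Real.rpow_le_rpow ht0.le ht2L (by linarith)) (Real.rpow_nonneg ht0.le α)
    rw [hC_def]
    have hrnn : (0:ℝ) ≤ (x₁ - x₂) ^ α := Real.rpow_nonneg ht0.le α
    have h0 : (0:ℝ) ≤ 1 / T₀ * K := by positivity
    nlinarith [mul_le_mul_of_nonneg_left hsq h0]
  refine ⟨C, fun E hE x₁ hx₁ x₂ hx₂ => ?_⟩
  rcases le_total x₂ x₁ with h | h
  · exact main E hE x₁ hx₁ x₂ hx₂ h
  · rw [abs_sub_comm (θ x₁ E) (θ x₂ E), abs_sub_comm x₁ x₂]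
    exact main E hE x₂ hx₂ x₁ hx₁ h
end

section
/- Let A, A₀ be selfadjoint operators on a Hilbert space H such that the wave operators W_± = s-lim_{t→±∞} e^{itA} e^{-itA₀} exist, are isometric, and are complete (range = H_ac(A)), and suppose A, A₀ ≥ δ > 0. Define on H ⊕ H the operators 𝐇 = C diag(√A, -√A) C* and 𝐇₀ = C diag(√A₀, -√A₀) C*, where C = (1/√2)[[-i, i],[1,1]]. If the wave operators for (√A, √A₀) exist and equal W_±, then the wave operators W_±(𝐇, 𝐇₀) exist, are isometric and complete, and are given by the 2×2 block matrix (1/2)[[W_± + W_∓, i(W_∓ - W_±)],[i(W_± - W_∓), W_± + W_∓]]. -/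
/-!
Conjugation by the unitary `C` diagonalises everything: `e^{it𝐇} e^{-it𝐇₀}` is
`C diag(e^{it√A} e^{-it√A₀}, e^{-it√A} e^{it√A₀}) C*`, and the second diagonal entry is the
first one at time `-t`. Hence `W_±(𝐇, 𝐇₀) = C diag(W_±, W_∓) C*`, which multiplies out to the
stated block matrix, and since `C` is unitary, isometry and the range `C (Hac ⊕ Hac)` are
inherited from `W_±`.
-/

open Filter

section WaveEquation

variable {H : Type*} [NormedAddCommGroup H] [InnerProductSpace ℂ H] [CompleteSpace H]

/-- The unitary `2×2` matrix `C = (1/√2)[[-i, i],[1,1]]` acting on `H ⊕ H`. -/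
noncomputable def Cmap (p : H × H) : H × H :=
  (((Real.sqrt 2)⁻¹ : ℂ) • (-(Complex.I • p.1) + Complex.I • p.2),
   ((Real.sqrt 2)⁻¹ : ℂ) • (p.1 + p.2))

/-- The adjoint matrix `C* = (1/√2)[[i, 1],[-i, 1]]` acting on `H ⊕ H`. -/
noncomputable def Cstar (p : H × H) : H × H :=
  (((Real.sqrt 2)⁻¹ : ℂ) • (Complex.I • p.1 + p.2),
   ((Real.sqrt 2)⁻¹ : ℂ) • (-(Complex.I • p.1) + p.2))

/-- Given the unitary group `S t = e^{it√A}` of `√A`, the group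
`e^{it𝐇} = C diag(e^{it√A}, e^{-it√A}) C*` of `𝐇 = C diag(√A, -√A) C*`. -/
noncomputable def waveGroup (S : ℝ → H →L[ℂ] H) (t : ℝ) (p : H × H) : H × H :=
  Cmap (S t (Cstar p).1, S (-t) (Cstar p).2)

/-- The block matrix `(1/2)[[Wa + Wb, i(Wb - Wa)],[i(Wa - Wb), Wa + Wb]]`. -/
noncomputable def waveMatrix (Wa Wb : H →L[ℂ] H) (p : H × H) : H × H :=
  ((1 / 2 : ℂ) • ((Wa p.1 + Wb p.1) + Complex.I • (Wb p.2 - Wa p.2)),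
   (1 / 2 : ℂ) • (Complex.I • (Wa p.1 - Wb p.1) + (Wa p.2 + Wb p.2)))

lemma inv_sqrt_two_mul_self : (Real.sqrt 2 : ℂ)⁻¹ * (Real.sqrt 2 : ℂ)⁻¹ = 1 / 2 := by
  rw [← mul_inv, ← Complex.ofReal_mul, Real.mul_self_sqrt zero_le_two]
  norm_num

section

omit [CompleteSpace H]

lemma norm_inv_sqrt_two_smul_sq (x : H) : ‖(Real.sqrt 2 : ℂ)⁻¹ • x‖ ^ 2 = ‖x‖ ^ 2 / 2 := by
  rw [norm_smul, mul_pow, norm_inv, Complex.norm_real, Real.norm_of_nonneg (Real.sqrt_nonneg 2),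
    inv_pow, Real.sq_sqrt zero_le_two, inv_mul_eq_div]

lemma Cstar_Cmap (p : H × H) : Cstar (Cmap p) = p := by
  have hc := inv_sqrt_two_mul_self
  ext <;> simp only [Cmap, Cstar, smul_add, smul_neg, smul_smul] <;> match_scalars <;>
    grind [Complex.I_mul_I]

lemma continuous_Cmap : Continuous (Cmap : H × H → H × H) := by
  unfold Cmap; fun_prop

lemma norm_sq_Cmap (p : H × H) :
    ‖(Cmap p).1‖ ^ 2 + ‖(Cmap p).2‖ ^ 2 = ‖p.1‖ ^ 2 + ‖p.2‖ ^ 2 := by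
  have h : -(Complex.I • p.1) + Complex.I • p.2 = Complex.I • (p.2 - p.1) := by
    rw [smul_sub, neg_add_eq_sub]
  simp only [Cmap, h, norm_inv_sqrt_two_smul_sq]
  rw [norm_smul, Complex.norm_I, one_mul, norm_sub_rev]
  linear_combination parallelogram_law_with_norm ℂ p.1 p.2 / 2

lemma norm_sq_Cstar (p : H × H) :
    ‖(Cstar p).1‖ ^ 2 + ‖(Cstar p).2‖ ^ 2 = ‖p.1‖ ^ 2 + ‖p.2‖ ^ 2 := by
  have h : -(Complex.I • p.1) + p.2 = -(Complex.I • p.1 - p.2) := by abel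
  have hI : ‖Complex.I • p.1‖ = ‖p.1‖ := by rw [norm_smul, Complex.norm_I, one_mul]
  simp only [Cstar, h, norm_neg, norm_inv_sqrt_two_smul_sq]
  rw [← hI]
  linear_combination parallelogram_law_with_norm ℂ (Complex.I • p.1) p.2 / 2

lemma waveMatrix_eq_comp (Wa Wb : H →L[ℂ] H) :
    waveMatrix Wa Wb = Cmap ∘ Prod.map Wa Wb ∘ Cstar := by
  have hc := inv_sqrt_two_mul_self
  ext p <;> simp only [waveMatrix, Cmap, Cstar, Function.comp_apply, Prod.map_fst, Prod.map_snd,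
    map_add, map_smul, map_neg, smul_add, smul_neg, smul_smul, smul_sub] <;>
    match_scalars <;> grind [Complex.I_mul_I]

lemma waveGroup_apply_waveGroup_neg (S S₀ : ℝ → H →L[ℂ] H) (t : ℝ) (p : H × H) :
    waveGroup S t (waveGroup S₀ (-t) p) =
      Cmap (S t (S₀ (-t) (Cstar p).1), S (-t) (S₀ t (Cstar p).2)) := by
  simp only [waveGroup, Cstar_Cmap, neg_neg]

lemma tendsto_waveGroup_apply_waveGroup_neg {S S₀ : ℝ → H →L[ℂ] H} {Wa Wb : H →L[ℂ] H}
    {l l' : Filter ℝ} (ha : ∀ f, Tendsto (fun t => S t (S₀ (-t) f)) l (nhds (Wa f)))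
    (hb : ∀ f, Tendsto (fun t => S t (S₀ (-t) f)) l' (nhds (Wb f)))
    (hneg : Tendsto Neg.neg l l') (p : H × H) :
    Tendsto (fun t => waveGroup S t (waveGroup S₀ (-t) p)) l (nhds (waveMatrix Wa Wb p)) := by
  have hb' : Tendsto (fun t => S (-t) (S₀ t (Cstar p).2)) l (nhds (Wb (Cstar p).2)) := by
    simpa [Function.comp_def] using (hb (Cstar p).2).comp hneg
  simp only [waveGroup_apply_waveGroup_neg, waveMatrix_eq_comp, Function.comp_apply]
  exact (continuous_Cmap.tendsto _).comp ((ha _).prodMk_nhds hb')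

lemma norm_sq_waveMatrix {Wa Wb : H →L[ℂ] H} (ha : ∀ f, ‖Wa f‖ = ‖f‖) (hb : ∀ f, ‖Wb f‖ = ‖f‖)
    (p : H × H) :
    ‖(waveMatrix Wa Wb p).1‖ ^ 2 + ‖(waveMatrix Wa Wb p).2‖ ^ 2 = ‖p.1‖ ^ 2 + ‖p.2‖ ^ 2 := by
  simp only [waveMatrix_eq_comp, Function.comp_apply, norm_sq_Cmap, Prod.map_fst, Prod.map_snd,
    ha, hb, norm_sq_Cstar]

lemma range_waveMatrix (Wa Wb : H →L[ℂ] H) :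
    Set.range (waveMatrix Wa Wb) = Cmap '' (Set.range Wa ×ˢ Set.range Wb) := by
  rw [waveMatrix_eq_comp, Set.range_comp,
    (Function.RightInverse.surjective Cstar_Cmap).range_comp, Set.range_prodMap]

end

theorem wave_operators_antonov_wave_equation_general
    (S S₀ : ℝ → H →L[ℂ] H)
    (Wp Wm : H →L[ℂ] H)
    (hWp : ∀ f : H, Tendsto (fun t : ℝ => S t (S₀ (-t) f)) atTop (nhds (Wp f)))
    (hWm : ∀ f : H, Tendsto (fun t : ℝ => S t (S₀ (-t) f)) atBot (nhds (Wm f)))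
    (hWpIso : ∀ f : H, ‖Wp f‖ = ‖f‖) (hWmIso : ∀ f : H, ‖Wm f‖ = ‖f‖)
    (Hac : Submodule ℂ H)
    (hWpRange : Set.range Wp = (Hac : Set H))
    (hWmRange : Set.range Wm = (Hac : Set H)) :
    -- existence of `W_±(𝐇,𝐇₀)`, with the asserted block-matrix form
    (∀ p : H × H,
      Tendsto (fun t : ℝ => waveGroup S t (waveGroup S₀ (-t) p)) atTop
        (nhds (waveMatrix Wp Wm p))) ∧
    (∀ p : H × H,
      Tendsto (fun t : ℝ => waveGroup S t (waveGroup S₀ (-t) p)) atBot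
        (nhds (waveMatrix Wm Wp p))) ∧
    -- isometry of `W_±(𝐇,𝐇₀)` on `H ⊕ H`
    (∀ p : H × H,
      ‖(waveMatrix Wp Wm p).1‖ ^ 2 + ‖(waveMatrix Wp Wm p).2‖ ^ 2 =
        ‖p.1‖ ^ 2 + ‖p.2‖ ^ 2 ∧
      ‖(waveMatrix Wm Wp p).1‖ ^ 2 + ‖(waveMatrix Wm Wp p).2‖ ^ 2 =
        ‖p.1‖ ^ 2 + ‖p.2‖ ^ 2) ∧
    -- completeness: the range is the absolutely continuous subspace
    -- `𝐇_ac(𝐇) = C (Hac ⊕ Hac)` of `𝐇`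
    Set.range (waveMatrix Wp Wm) = Cmap '' ((Hac : Set H) ×ˢ (Hac : Set H)) ∧
    Set.range (waveMatrix Wm Wp) = Cmap '' ((Hac : Set H) ×ˢ (Hac : Set H)) := by
  exact ⟨tendsto_waveGroup_apply_waveGroup_neg hWp hWm tendsto_neg_atTop_atBot,
    tendsto_waveGroup_apply_waveGroup_neg hWm hWp tendsto_neg_atBot_atTop,
    fun p => ⟨norm_sq_waveMatrix hWpIso hWmIso p, norm_sq_waveMatrix hWmIso hWpIso p⟩,
    by rw [range_waveMatrix, hWpRange, hWmRange], by rw [range_waveMatrix, hWpRange, hWmRange]⟩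

/-- **Wave operators for the Antonov wave equation.**
Let `A, A₀ ≥ δ > 0` be selfadjoint with unitary groups `S t = e^{it√A}` and
`S₀ t = e^{it√A₀}` of their square roots.  Suppose the wave operators
`W_± = s-lim_{t→±∞} e^{it√A} e^{-it√A₀}` exist, are isometric and complete with
range the absolutely continuous subspace `Hac` of `A` (by the invariance
principle these coincide with the wave operators for `(A, A₀)`).  Define on
`H ⊕ H` the operators `𝐇 = C diag(√A,-√A) C*` and `𝐇₀ = C diag(√A₀,-√A₀) C*`,
where `C = (1/√2)[[-i,i],[1,1]]`, whose groups are `waveGroup S` and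
`waveGroup S₀`.  Then the wave operators `W_±(𝐇,𝐇₀)` exist, are isometric and
complete, and are given by the block matrix
`(1/2)[[W_± + W_∓, i(W_∓ - W_±)],[i(W_± - W_∓), W_± + W_∓]]`. -/
theorem wave_operators_antonov_wave_equation
    (S S₀ : ℝ → H →L[ℂ] H)
    (hS0 : S 0 = 1) (hSgrp : ∀ s t : ℝ, S (s + t) = S s ∘L S t)
    (hSiso : ∀ t : ℝ, ∀ f : H, ‖S t f‖ = ‖f‖)
    (hS₀0 : S₀ 0 = 1) (hS₀grp : ∀ s t : ℝ, S₀ (s + t) = S₀ s ∘L S₀ t)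
    (hS₀iso : ∀ t : ℝ, ∀ f : H, ‖S₀ t f‖ = ‖f‖)
    (Wp Wm : H →L[ℂ] H)
    (hWp : ∀ f : H, Tendsto (fun t : ℝ => S t (S₀ (-t) f)) atTop (nhds (Wp f)))
    (hWm : ∀ f : H, Tendsto (fun t : ℝ => S t (S₀ (-t) f)) atBot (nhds (Wm f)))
    (hWpIso : ∀ f : H, ‖Wp f‖ = ‖f‖) (hWmIso : ∀ f : H, ‖Wm f‖ = ‖f‖)
    (Hac : Submodule ℂ H) (hHacClosed : IsClosed (Hac : Set H))
    (hWpRange : Set.range Wp = (Hac : Set H))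
    (hWmRange : Set.range Wm = (Hac : Set H)) :
    -- existence of `W_±(𝐇,𝐇₀)`, with the asserted block-matrix form
    (∀ p : H × H,
      Tendsto (fun t : ℝ => waveGroup S t (waveGroup S₀ (-t) p)) atTop
        (nhds (waveMatrix Wp Wm p))) ∧
    (∀ p : H × H,
      Tendsto (fun t : ℝ => waveGroup S t (waveGroup S₀ (-t) p)) atBot
        (nhds (waveMatrix Wm Wp p))) ∧
    -- isometry of `W_±(𝐇,𝐇₀)` on `H ⊕ H`
    (∀ p : H × H,
      ‖(waveMatrix Wp Wm p).1‖ ^ 2 + ‖(waveMatrix Wp Wm p).2‖ ^ 2 =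
        ‖p.1‖ ^ 2 + ‖p.2‖ ^ 2 ∧
      ‖(waveMatrix Wm Wp p).1‖ ^ 2 + ‖(waveMatrix Wm Wp p).2‖ ^ 2 =
        ‖p.1‖ ^ 2 + ‖p.2‖ ^ 2) ∧
    -- completeness: the range is the absolutely continuous subspace
    -- `𝐇_ac(𝐇) = C (Hac ⊕ Hac)` of `𝐇`
    Set.range (waveMatrix Wp Wm) = Cmap '' ((Hac : Set H) ×ˢ (Hac : Set H)) ∧
    Set.range (waveMatrix Wm Wp) = Cmap '' ((Hac : Set H) ×ˢ (Hac : Set H)) :=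
  wave_operators_antonov_wave_equation_general S S₀ Wp Wm hWp hWm hWpIso hWmIso Hac hWpRange
    hWmRange

end WaveEquation
end
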